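/- arXiv:2401.05762 — 2 statements merged into one kernel-verified Lean document; each statement's English description precedes it below -/
import Mathlib

section
/- The involution σ(u,v) = (u⁻¹, v⁻¹) on (ℂ*)² satisfies η ∘ σ = η, where η(u,v) = (u + 1/u, v + 1/v, uv + 1/(uv)); moreover η(u,v) = η(u',v') implies (u',v') = (u,v) or (u',v') = (u⁻¹, v⁻¹). -/
lemma key_two_to_one (a b : ℂˣ)
    (h : (a : ℂ) + ((a⁻¹ : ℂˣ) : ℂ) = (b : ℂ) + ((b⁻¹ : ℂˣ) : ℂ)) :
    a = b ∨ a = b⁻¹ := by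
  have hA : (a : ℂ) ≠ 0 := a.ne_zero
  have hB : (b : ℂ) ≠ 0 := b.ne_zero
  rw [Units.val_inv_eq_inv_val, Units.val_inv_eq_inv_val] at h
  have h2 : ((a : ℂ) - b) * ((a : ℂ) * b - 1) = 0 := by
    field_simp at h
    linear_combination h
  rcases mul_eq_zero.1 h2 with h3 | h3
  · left
    exact Units.ext (by linear_combination h3)
  · right
    have : a * b = 1 := Units.ext (by push_cast; linear_combination h3)
    exact eq_inv_of_mul_eq_one_left ((mul_comm a b) ▸ this)

/-- η ∘ σ = η for σ(u,v) = (u⁻¹, v⁻¹), and η(u,v) = η(u',v') implies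
(u',v') = (u,v) or (u',v') = (u⁻¹, v⁻¹), where
η(u,v) = (u + 1/u, v + 1/v, uv + 1/(uv)). -/
theorem eta_inversion_invariant_and_two_to_one :
    (∀ u v : ℂˣ,
      (fun p : ℂˣ × ℂˣ =>
        (((p.1 : ℂ) + ((p.1⁻¹ : ℂˣ) : ℂ)), ((p.2 : ℂ) + ((p.2⁻¹ : ℂˣ) : ℂ)),
          (((p.1 * p.2 : ℂˣ) : ℂ) + (((p.1 * p.2)⁻¹ : ℂˣ) : ℂ)))) (u⁻¹, v⁻¹)
        = (fun p : ℂˣ × ℂˣ =>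
        (((p.1 : ℂ) + ((p.1⁻¹ : ℂˣ) : ℂ)), ((p.2 : ℂ) + ((p.2⁻¹ : ℂˣ) : ℂ)),
          (((p.1 * p.2 : ℂˣ) : ℂ) + (((p.1 * p.2)⁻¹ : ℂˣ) : ℂ)))) (u, v)) ∧
    (∀ u v u' v' : ℂˣ,
      (fun p : ℂˣ × ℂˣ =>
        (((p.1 : ℂ) + ((p.1⁻¹ : ℂˣ) : ℂ)), ((p.2 : ℂ) + ((p.2⁻¹ : ℂˣ) : ℂ)),
          (((p.1 * p.2 : ℂˣ) : ℂ) + (((p.1 * p.2)⁻¹ : ℂˣ) : ℂ)))) (u', v')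
        = (fun p : ℂˣ × ℂˣ =>
        (((p.1 : ℂ) + ((p.1⁻¹ : ℂˣ) : ℂ)), ((p.2 : ℂ) + ((p.2⁻¹ : ℂˣ) : ℂ)),
          (((p.1 * p.2 : ℂˣ) : ℂ) + (((p.1 * p.2)⁻¹ : ℂˣ) : ℂ)))) (u, v) →
      ((u', v') = (u, v) ∨ (u', v') = (u⁻¹, v⁻¹))) := by
  constructor
  · intro u v
    simp only
    have h3 : u⁻¹ * v⁻¹ = (u * v)⁻¹ := by rw [mul_comm, mul_inv_rev]
    rw [h3, inv_inv, inv_inv, inv_inv]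
    push_cast [Units.val_inv_eq_inv_val]
    ring_nf
  · intro u v u' v' h
    simp only [Prod.mk.injEq] at h
    obtain ⟨h1, h2, h3⟩ := h
    rcases key_two_to_one u' u h1 with hu | hu <;>
      rcases key_two_to_one v' v h2 with hv | hv
    · left; rw [hu, hv]
    · -- u' = u, v' = v⁻¹
      rw [hu, hv] at h3
      rcases key_two_to_one (u * v⁻¹) (u * v) h3 with h4 | h4
      · left
        have : v⁻¹ = v := mul_left_cancel h4
        rw [hu, hv, this]
      · right
        rw [mul_inv_rev, mul_comm] at h4
        have : u = u⁻¹ := mul_left_cancel h4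
        rw [hu, hv, ← this]
    · -- u' = u⁻¹, v' = v
      rw [hu, hv] at h3
      rcases key_two_to_one (u⁻¹ * v) (u * v) h3 with h4 | h4
      · left
        have : u⁻¹ = u := mul_right_cancel h4
        rw [hu, hv, this]
      · right
        rw [mul_inv_rev, mul_comm] at h4
        have : v = v⁻¹ := mul_right_cancel h4
        rw [hu, hv, ← this]
    · right; rw [hu, hv]
end

section
/- A point (u,v) ∈ (ℂ*)² is fixed by some nontrivial iterate of the monomial map associated to a matrix M ∈ GL₂(ℤ) whose eigenvalues have modulus ≠ 1 if and only if u and v are both roots of unity. -/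
/-!
Write the monomial map of an integer matrix `A` on `Gⁿ` as `x ↦ (∏ⱼ xⱼ ^ Aᵢⱼ)ᵢ`. It turns matrix
products into composition, so `x` is fixed by the `n`-th iterate iff `monomialMap (Aⁿ - 1) x = 1`.
Applying the adjugate of `Aⁿ - 1` then gives `xᵢ ^ det (Aⁿ - 1) = 1` for all `i`, and
`det (Aⁿ - 1) ≠ 0` because the eigenvalues of `Aⁿ` are the `n`-th powers of those of `A`, none of
which lies on the unit circle. Conversely, if all `xᵢ` have order dividing `m`, the monomial map
only sees `A` modulo `m`; as `A` is invertible, it has finite order in the finite group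
`GLₙ(ℤ/m)`, so `Aᵏ ≡ 1 (mod m)` for some `k ≥ 1` and `x` is fixed by the `k`-th iterate.
-/

open Function

theorem zpow_sum {G ι : Type*} [CommGroup G] (s : Finset ι) (f : ι → ℤ) (x : G) :
    x ^ (∑ i ∈ s, f i) = ∏ i ∈ s, x ^ f i := by
  induction s using Finset.cons_induction with
  | empty => simp
  | cons a s ha ih => rw [Finset.sum_cons, Finset.prod_cons, zpow_add, ih]

section MonomialMap

variable {G ι : Type*} [CommGroup G] [Fintype ι]

def monomialMap (A : Matrix ι ι ℤ) (x : ι → G) : ι → G :=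
  fun i => ∏ j, x j ^ A i j

variable (A B : Matrix ι ι ℤ) (x : ι → G)

theorem monomialMap_mul : monomialMap (A * B) x = monomialMap A (monomialMap B x) := by
  funext i
  simp only [monomialMap, Matrix.mul_apply, zpow_sum, ← Finset.prod_zpow, ← zpow_mul]
  rw [Finset.prod_comm]
  simp only [mul_comm]

theorem monomialMap_one [DecidableEq ι] : monomialMap 1 x = x := by
  funext i
  simp [monomialMap, Matrix.one_apply]

theorem monomialMap_sub : monomialMap (A - B) x = monomialMap A x / monomialMap B x := by
  funext i
  simp only [monomialMap, Matrix.sub_apply, Pi.div_apply, zpow_sub, ← div_eq_mul_inv,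
    Finset.prod_div_distrib]

theorem monomialMap_smul (d : ℤ) : monomialMap (d • A) x = monomialMap A x ^ d := by
  funext i
  simp [monomialMap, ← Finset.prod_zpow, ← zpow_mul, mul_comm]

theorem monomialMap_one_right : monomialMap A (1 : ι → G) = 1 := by
  funext i
  simp [monomialMap]

theorem monomialMap_iterate [DecidableEq ι] (n : ℕ) :
    (monomialMap (G := G) A)^[n] = monomialMap (A ^ n) := by
  induction n with
  | zero => funext x; exact (monomialMap_one x).symm
  | succ n ih => funext x; rw [iterate_succ_apply', ih, pow_succ', monomialMap_mul]

theorem monomialMap_iterate_eq_self_iff [DecidableEq ι] (n : ℕ) :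
    (monomialMap A)^[n] x = x ↔ monomialMap (A ^ n - 1) x = 1 := by
  rw [monomialMap_sub, monomialMap_one, monomialMap_iterate, div_eq_one]

theorem zpow_det_eq_one_of_monomialMap_eq_one [DecidableEq ι] (h : monomialMap A x = 1)
    (i : ι) : x i ^ A.det = 1 := by
  have h' := congrArg (monomialMap A.adjugate) h
  rw [← monomialMap_mul, Matrix.adjugate_mul, monomialMap_smul, monomialMap_one,
    monomialMap_one_right] at h'
  exact congrFun h' i

theorem monomialMap_eq_one_of_orderOf_dvd (h : ∀ i j, (orderOf (x j) : ℤ) ∣ A i j) :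
    monomialMap A x = 1 :=
  funext fun i => Finset.prod_eq_one fun j _ => orderOf_dvd_iff_zpow_eq_one.mp (h i j)

end MonomialMap

theorem Matrix.exists_dvd_pow_sub_one_apply {ι : Type*} [Fintype ι] [DecidableEq ι]
    (A : Matrix ι ι ℤ) (hA : IsUnit A) {m : ℕ} (hm : m ≠ 0) :
    ∃ k, 0 < k ∧ ∀ i j, (m : ℤ) ∣ (A ^ k - 1) i j := by
  have : NeZero m := ⟨hm⟩
  let f := (Int.castRingHom (ZMod m)).mapMatrix (m := ι)
  obtain ⟨k, hk, hk1⟩ := (isOfFinOrder_of_finite (hA.map f).unit).exists_pow_eq_one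
  have hfk : f (A ^ k - 1) = 0 := by
    rw [map_sub, map_pow, map_one, sub_eq_zero]
    exact congrArg Units.val hk1
  exact ⟨k, hk, fun i j => (ZMod.intCast_zmod_eq_zero_iff_dvd _ m).mp (congrFun (congrFun hfk i) j)⟩

theorem Matrix.det_pow_sub_one_ne_zero {ι K : Type*} [Fintype ι] [DecidableEq ι] [Field K]
    [IsAlgClosed K] (B : Matrix ι ι K) {n : ℕ} (hn : 0 < n)
    (hB : ∀ z ∈ spectrum K B, z ^ n ≠ 1) : (B ^ n - 1).det ≠ 0 := by
  intro h
  have h1 : (1 : K) ∈ spectrum K (B ^ n) := by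
    rw [spectrum.mem_iff, Matrix.isUnit_iff_isUnit_det, map_one, ← neg_sub, Matrix.det_neg, h]
    simp
  rw [spectrum.map_pow_of_pos B hn] at h1
  obtain ⟨z, hz, hz1⟩ := h1
  exact hB z hz hz1

theorem Matrix.det_pow_sub_one_ne_zero_of_norm_ne_one {ι : Type*} [Fintype ι] [DecidableEq ι]
    (A : Matrix ι ι ℤ) (hA : ∀ z ∈ spectrum ℂ (A.map (Int.cast : ℤ → ℂ)), ‖z‖ ≠ 1)
    {n : ℕ} (hn : 0 < n) : (A ^ n - 1).det ≠ 0 := by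
  have hC := (A.map (Int.cast : ℤ → ℂ)).det_pow_sub_one_ne_zero hn
    fun z hz hzn => hA z hz (Complex.norm_eq_one_of_pow_eq_one hzn hn.ne')
  contrapose! hC
  have := (Int.castRingHom ℂ).map_det (A ^ n - 1)
  rw [hC, map_zero, map_sub, map_pow, map_one, RingHom.mapMatrix_apply] at this
  exact this.symm

section Periodic

variable {G ι : Type*} [CommGroup G] [Fintype ι] [DecidableEq ι] (A : Matrix ι ι ℤ) (x : ι → G)

theorem mem_periodicPts_monomialMap_of_isOfFinOrder (hA : IsUnit A)
    (hx : ∀ i, IsOfFinOrder (x i)) : x ∈ periodicPts (monomialMap A) := by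
  obtain ⟨k, hk, hdvd⟩ := A.exists_dvd_pow_sub_one_apply hA (m := ∏ i, orderOf (x i))
    (Finset.prod_ne_zero_iff.mpr fun i _ => (hx i).orderOf_pos.ne')
  refine mem_periodicPts.mpr ⟨k, hk, (monomialMap_iterate_eq_self_iff A x k).mpr ?_⟩
  refine monomialMap_eq_one_of_orderOf_dvd _ _ fun i j => Int.dvd_trans ?_ (hdvd i j)
  exact Int.natCast_dvd_natCast.mpr (Finset.dvd_prod_of_mem _ (Finset.mem_univ j))

theorem isOfFinOrder_of_mem_periodicPts_monomialMap (hA : ∀ n, 0 < n → (A ^ n - 1).det ≠ 0)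
    (hx : x ∈ periodicPts (monomialMap A)) (i : ι) : IsOfFinOrder (x i) := by
  obtain ⟨n, hn, hfix⟩ := mem_periodicPts.mp hx
  have hdet := zpow_det_eq_one_of_monomialMap_eq_one _ _
    ((monomialMap_iterate_eq_self_iff A x n).mp hfix) i
  exact isOfFinOrder_iff_zpow_eq_one.mpr ⟨_, hA n hn, hdet⟩

theorem mem_periodicPts_monomialMap_iff (hA : IsUnit A)
    (hA' : ∀ n, 0 < n → (A ^ n - 1).det ≠ 0) :
    x ∈ periodicPts (monomialMap A) ↔ ∀ i, IsOfFinOrder (x i) :=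
  ⟨isOfFinOrder_of_mem_periodicPts_monomialMap A x hA',
    mem_periodicPts_monomialMap_of_isOfFinOrder A x hA⟩

end Periodic

/-- A point (u,v) ∈ (ℂ*)² is periodic for the monomial map of a matrix M ∈ GL₂(ℤ)
with no eigenvalue of modulus 1 if and only if u and v are roots of unity. -/
theorem monomial_periodic_iff_roots_of_unity (M : Matrix (Fin 2) (Fin 2) ℤ)
    (hdet : M.det = 1 ∨ M.det = -1)
    (heig : ∀ z : ℂ, ((M.map (Int.cast : ℤ → ℂ)).charpoly).IsRoot z → ‖z‖ ≠ 1)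
    (u v : ℂˣ) :
    (∃ n : ℕ, 1 ≤ n ∧
        (fun p : ℂˣ × ℂˣ =>
            (p.1 ^ M 0 0 * p.2 ^ M 0 1, p.1 ^ M 1 0 * p.2 ^ M 1 1))^[n] (u, v) = (u, v)) ↔
      ((∃ k : ℕ, 1 ≤ k ∧ u ^ k = 1) ∧ (∃ k : ℕ, 1 ≤ k ∧ v ^ k = 1)) := by
  set f : ℂˣ × ℂˣ → ℂˣ × ℂˣ := fun p => (p.1 ^ M 0 0 * p.2 ^ M 0 1, p.1 ^ M 1 0 * p.2 ^ M 1 1)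
  have hconj : Semiconj (finTwoArrowEquiv ℂˣ) (monomialMap M) f := fun x => by
    simp [f, monomialMap, Fin.prod_univ_two]
  have hiter (n : ℕ) : f^[n] (u, v) = (u, v) ↔ IsPeriodicPt (monomialMap M) n ![u, v] := by
    rw [IsPeriodicPt, IsFixedPt, ← (finTwoArrowEquiv ℂˣ).injective.eq_iff, hconj.iterate_right]
    rfl
  have hunit : IsUnit M := M.isUnit_iff_isUnit_det.mpr (Int.isUnit_iff.mpr hdet)
  have hspec : ∀ z ∈ spectrum ℂ (M.map (Int.cast : ℤ → ℂ)), ‖z‖ ≠ 1 := fun z hz =>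
    heig z (Matrix.mem_spectrum_iff_isRoot_charpoly.mp hz)
  calc _ ↔ ![u, v] ∈ periodicPts (monomialMap M) := exists_congr fun n => and_congr_right' (hiter n)
    _ ↔ ∀ i, IsOfFinOrder (![u, v] i) := mem_periodicPts_monomialMap_iff M _ hunit
        fun n hn => M.det_pow_sub_one_ne_zero_of_norm_ne_one hspec hn
    _ ↔ _ := by simp only [Fin.forall_fin_two, isOfFinOrder_iff_pow_eq_one]; rfl
end
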